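/- Let (𝔞,ω_𝔞) be an orthosymplectic quasi-Frobenius Lie superalgebra over 𝕂, let D be an odd derivation of 𝔞 with adjoint D*, and suppose there exists an even element a₀ ∈ 𝔞 such that ω_𝔞((D∘D − D*∘D*)(a), b) = ω_𝔞(a₀, [a,b]_𝔞) for all a,b ∈ 𝔞, D∘D = ad_{a₀} (i.e. D(D(a)) = [a₀,a]_𝔞 for all a), and D(a₀) = 0. Then on 𝔤 = 𝕂x ⊕ 𝔞 ⊕ 𝕂x*, with x and x* odd, the brackets [x,y]_𝔤 = 0 for all y ∈ 𝔤, [a,b]_𝔤 = [a,b]_𝔞 + (ω_𝔞(D(a),b) + (−1)^{p(a)}ω_𝔞(a,D(b)))·x, [x*,x*]_𝔤 = 2a₀, and [x*,a]_𝔤 = D(a) − ω_𝔞(a,a₀)·x for a,b ∈ 𝔞, define a Lie superalgebra structure; moreover the even bilinear form ω_𝔤 determined by ω_𝔤|_{𝔞×𝔞} = ω_𝔞, ω_𝔤(𝔞,x) = ω_𝔤(𝔞,x*) = 0, ω_𝔤(x*,x) = 1, and ω_𝔤(x,x) = ω_𝔤(x*,x*) = 0 is a closed anti-symmetric non-degenerate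 form, so (𝔤,ω_𝔤) is an orthosymplectic quasi-Frobenius Lie superalgebra. -/

import Mathlib

noncomputable section

/-- The sign `(−1)^{ij}` for parities `i, j` encoded as booleans
(`false` = even, `true` = odd). -/
def ssign (K : Type*) [Field K] (i j : Bool) : K := if i && j then -1 else 1

section Defs

variable (K : Type*) [Field K]

/-- A map `f : V → V → W` is bilinear over `K`. -/
def IsBilinMap (V W : Type*) [AddCommGroup V] [Module K V] [AddCommGroup W] [Module K W]
    (f : V → V → W) : Prop :=
  (∀ x y z : V, f (x + y) z = f x z + f y z) ∧
  (∀ (c : K) (x y : V), f (c • x) y = c • f x y) ∧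
  (∀ x y z : V, f x (y + z) = f x y + f x z) ∧
  (∀ (c : K) (x y : V), f x (c • y) = c • f x y)

variable (V : Type*) [AddCommGroup V] [Module K V]

/-- A Lie superalgebra structure over `K` on the `ℤ/2`-graded space `V`,
with homogeneous components `sub false` (even part) and `sub true` (odd part),
and bracket `br`.  Includes super anti-commutativity, the super Jacobi identity,
and (when `char K = 3`) the extra cubic condition on odd elements. -/
structure IsLieSuperAlg (sub : Bool → Submodule K V) (br : V → V → V) : Prop where
  compl : IsCompl (sub false) (sub true)
  bilin : IsBilinMap K V V br
  graded : ∀ i j : Bool, ∀ x ∈ sub i, ∀ y ∈ sub j, br x y ∈ sub (Bool.xor i j)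
  antisymm : ∀ i j : Bool, ∀ x ∈ sub i, ∀ y ∈ sub j, br y x = -(ssign K i j • br x y)
  jacobi : ∀ i j k : Bool, ∀ x ∈ sub i, ∀ y ∈ sub j, ∀ z ∈ sub k,
    ssign K i k • br x (br y z) + ssign K j i • br y (br z x) + ssign K k j • br z (br x y) = 0
  jacobi3 : ringChar K = 3 → ∀ f ∈ sub true, br f (br f f) = 0

/-- Graded anti-symmetry of a bilinear form: `ω(y,x) = -(-1)^{p(x)p(y)} ω(x,y)`. -/
def IsSuperSkew (sub : Bool → Submodule K V) (ω : V → V → K) : Prop :=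
  ∀ i j : Bool, ∀ x ∈ sub i, ∀ y ∈ sub j, ω y x = -(ssign K i j * ω x y)

/-- Closedness (2-cocycle condition) of a bilinear form with respect to a bracket. -/
def IsClosedForm (sub : Bool → Submodule K V) (br : V → V → V) (ω : V → V → K) : Prop :=
  ∀ i j k : Bool, ∀ x ∈ sub i, ∀ y ∈ sub j, ∀ z ∈ sub k,
    ssign K i k * ω x (br y z) + ssign K k j * ω z (br x y) + ssign K j i * ω y (br z x) = 0

/-- Non-degeneracy of a bilinear form. -/
def IsNondegForm (ω : V → V → K) : Prop := ∀ x : V, (∀ y : V, ω x y = 0) → x = 0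

/-- A bilinear form is even if it vanishes on pairs of homogeneous elements
of opposite parity. -/
def IsEvenForm (sub : Bool → Submodule K V) (ω : V → V → K) : Prop :=
  ∀ x y : V, (x ∈ sub false ∧ y ∈ sub true) ∨ (x ∈ sub true ∧ y ∈ sub false) → ω x y = 0

/-- A bilinear form is odd if it vanishes on pairs of homogeneous elements
of the same parity. -/
def IsOddForm (sub : Bool → Submodule K V) (ω : V → V → K) : Prop :=
  ∀ i : Bool, ∀ x ∈ sub i, ∀ y ∈ sub i, ω x y = 0

/-- `(𝔤, ω)` is quasi-Frobenius: `ω` is a closed anti-symmetric non-degenerate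
bilinear form. -/
def IsQuasiFrobenius (sub : Bool → Submodule K V) (br : V → V → V) (ω : V → V → K) : Prop :=
  IsBilinMap K V K ω ∧ IsSuperSkew K V sub ω ∧ IsClosedForm K V sub br ω ∧ IsNondegForm K V ω

end Defs

section DoubleExtension

variable (K A : Type*) [Field K] [AddCommGroup A] [Module K A]

/-- The grading of the double extension `𝕂x ⊕ 𝔞 ⊕ 𝕂x*` of a graded space `𝔞`,
in coordinates `(s, a, t) = s·x + a + t·x*`, where `x` has parity `xpar` and
`x*` has parity `epar`. -/
def dblSub (subA : Bool → Submodule K A) (xpar epar : Bool) :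
    Bool → Submodule K (K × A × K) := fun i =>
  ((if i = xpar then (⊤ : Submodule K K) else ⊥)).prod
    ((subA i).prod (if i = epar then (⊤ : Submodule K K) else ⊥))

/-- The bracket of the `𝒟`-even double extension (orthosymplectic case), in coordinates
`(s, a, t) = s·x + a + t·x*`:  `[x, 𝕂x ⊕ 𝔞] = 0`, `[x,x*] = λx`,
`[a,b] = [a,b]_𝔞 + ω_𝔞(D a + D* a, b)·x`, `[x*,a] = D a + ω_𝔞(Z, a)·x`. -/
def dblBrEvenO (brA : A → A → A) (ωA : A → A → K) (D Ds : A → A) (lam : K) (Z : A) :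
    K × A × K → K × A × K → K × A × K := fun p q =>
  (p.1 * q.2.2 * lam - p.2.2 * q.1 * lam + ωA (D p.2.1 + Ds p.2.1) q.2.1
      + p.2.2 * ωA Z q.2.1 - q.2.2 * ωA Z p.2.1,
   brA p.2.1 q.2.1 + p.2.2 • D q.2.1 - q.2.2 • D p.2.1,
   0)

/-- The bracket of the `𝒟`-even double extension (periplectic case), in coordinates
`(s, a, t) = s·x + a + t·e`:  `[x, 𝕂x ⊕ 𝔞] = 0`, `[x,e] = λx`,
`[a,b] = [a,b]_𝔞 + (ω_𝔞(D a, b) + ω_𝔞(a, D b))·x`, `[e,a] = D a + ω_𝔞(Z, a)·x`. -/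
def dblBrEvenP (brA : A → A → A) (ωA : A → A → K) (D : A → A) (lam : K) (Z : A) :
    K × A × K → K × A × K → K × A × K := fun p q =>
  (p.1 * q.2.2 * lam - p.2.2 * q.1 * lam + ωA (D p.2.1) q.2.1 + ωA p.2.1 (D q.2.1)
      + p.2.2 * ωA Z q.2.1 - q.2.2 * ωA Z p.2.1,
   brA p.2.1 q.2.1 + p.2.2 • D q.2.1 - q.2.2 • D p.2.1,
   0)

/-- The form of a double extension when the two new generators do not have the same
odd parity: `ω|_{𝔞×𝔞} = ω_𝔞`, the new generators are isotropic and orthogonal to `𝔞`,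
and the pairing of the two new generators is `ω(x*, x) = 1`, `ω(x, x*) = −1`. -/
def dblFormMinus (ωA : A → A → K) : K × A × K → K × A × K → K :=
  fun p q => ωA p.2.1 q.2.1 + p.2.2 * q.1 - p.1 * q.2.2

/-- The form of a double extension when the two new generators are both odd:
`ω|_{𝔞×𝔞} = ω_𝔞`, the new generators are isotropic and orthogonal to `𝔞`, and
`ω(x*, x) = 1 = ω(x, x*)`. -/
def dblFormPlus (ωA : A → A → K) : K × A × K → K × A × K → K :=
  fun p q => ωA p.2.1 q.2.1 + p.2.2 * q.1 + p.1 * q.2.2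

end DoubleExtension

/-!
The bracket is a central extension of `𝔞` by the cocycle
`c(a, b) = ω(D a, b) + (-1)^{p(a)} ω(a, D b)`, closed because `ω` is closed and `D` is a
derivation, followed by adjoining `x*`, which acts as `D - ω(·, a₀) x` and has `[x*, x*] = 2 a₀`.
Write a homogeneous element as `s x + a + t x*`, where `s = t = 0` if it is even. Since `x` is
central, each axiom of `𝔤` is a polynomial identity in the `t`-coordinates with coefficients in
`𝔞`. For the Jacobi identity, the coefficient of degree 0 is the Jacobi identity of `𝔞` together
with the closedness of `c`, that of degree 1 is the derivation rule for `D` and its compatibility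
with `c`, that of degree 2 is `D² = ad a₀`, and that of degree 3 vanishes as `D a₀ = 0` and
`ω(a₀, a₀) = 0`. Given `D² = ad a₀`, the condition on `D*` says exactly that `ω`
is `ad a₀`-invariant, because `(D*)² = -(D²)*` for odd `D`.
-/

@[simp] theorem ssign_false_left (K : Type*) [Field K] (j : Bool) : ssign K false j = 1 := rfl

@[simp] theorem ssign_false_right (K : Type*) [Field K] (i : Bool) : ssign K i false = 1 := by
  cases i <;> rfl

@[simp] theorem ssign_true_true (K : Type*) [Field K] : ssign K true true = -1 := rfl

theorem IsEvenForm.apply_eq_zero {K V : Type*} [Field K] [AddCommGroup V] [Module K V]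
    {sub : Bool → Submodule K V} {ω : V → V → K} (heven : IsEvenForm K V sub ω) {i : Bool}
    {x y : V} (hx : x ∈ sub i) (hy : y ∈ sub (!i)) : ω x y = 0 := by
  cases i
  · exact heven x y (Or.inl ⟨hx, hy⟩)
  · exact heven x y (Or.inr ⟨hx, hy⟩)

theorem Submodule.isCompl_prod {R M N : Type*} [Ring R] [AddCommGroup M] [Module R M]
    [AddCommGroup N] [Module R N] {p p' : Submodule R M} {q q' : Submodule R N}
    (hp : IsCompl p p') (hq : IsCompl q q') : IsCompl (p.prod q) (p'.prod q') := by
  constructor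
  · rw [disjoint_iff, Submodule.prod_inf_prod, hp.inf_eq_bot, hq.inf_eq_bot, Submodule.prod_bot]
  · rw [codisjoint_iff, Submodule.prod_sup_prod, hp.sup_eq_top, hq.sup_eq_top, Submodule.prod_top]

theorem LinearMap.isBilinMap {K V W : Type*} [Field K] [AddCommGroup V] [Module K V]
    [AddCommGroup W] [Module K W] (f : V →ₗ[K] V →ₗ[K] W) : IsBilinMap K V W (fun x y => f x y) :=
  ⟨by simp, by simp, by simp, by simp⟩

section Graded

variable {K A : Type*} [Field K] [AddCommGroup A] [Module K A] {sub : Bool → Submodule K A}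

theorem isCompl_parity (hc : IsCompl (sub false) (sub true)) (i : Bool) :
    IsCompl (sub i) (sub (!i)) := by
  cases i
  · exact hc
  · exact hc.symm

theorem LinearMap.ext_of_isCompl_parity {M : Type*} [AddCommGroup M] [Module K M]
    (hc : IsCompl (sub false) (sub true)) {f g : A →ₗ[K] M}
    (h : ∀ i, ∀ y ∈ sub i, f y = g y) : f = g :=
  LinearMap.ext_on_codisjoint hc.codisjoint (fun y hy => h false y hy) (fun y hy => h true y hy)

def parityInvolution (hc : IsCompl (sub false) (sub true)) : A →ₗ[K] A :=
  LinearMap.ofIsCompl hc (sub false).subtype (-(sub true).subtype)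

theorem parityInvolution_apply (hc : IsCompl (sub false) (sub true)) {i : Bool} {a : A}
    (ha : a ∈ sub i) : parityInvolution hc a = ssign K i true • a := by
  cases i
  · rw [ssign_false_left, one_smul]
    exact LinearMap.ofIsCompl_apply_left hc (u := ⟨a, ha⟩)
  · rw [ssign_true_true, neg_one_smul]
    exact LinearMap.ofIsCompl_apply_right hc (v := ⟨a, ha⟩)

theorem isCompl_dblSub (hc : IsCompl (sub false) (sub true)) (xpar epar : Bool) :
    IsCompl (dblSub K A sub xpar epar false) (dblSub K A sub xpar epar true) := by
  have hK : ∀ b : Bool, IsCompl (if false = b then (⊤ : Submodule K K) else ⊥)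
      (if true = b then ⊤ else ⊥) := by
    intro b
    cases b
    · exact isCompl_top_bot
    · exact isCompl_bot_top
  exact Submodule.isCompl_prod (hK xpar) (Submodule.isCompl_prod hc (hK epar))

theorem exists_eq_of_mem_dblSub {i : Bool} {X : K × A × K}
    (hX : X ∈ dblSub K A sub true true i) :
    ∃ s t : K, ∃ a ∈ sub i, X = (cond i s 0, a, cond i t 0) := by
  obtain ⟨s, a, t⟩ := X
  cases i <;> simp [dblSub] at hX
  · exact ⟨0, 0, a, hX.2.1, by simp [hX.1, hX.2.2]⟩
  · exact ⟨s, t, a, hX, rfl⟩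

theorem mk_mem_dblSub_iff {m : Bool} {x : K} {v : A} :
    (x, v, 0) ∈ dblSub K A sub true true m ↔ v ∈ sub m ∧ (m = false → x = 0) := by
  cases m <;> simp [dblSub, and_comm]

end Graded

section DblFormPlus

variable {K A : Type*} [Field K] [AddCommGroup A] [Module K A] {sub : Bool → Submodule K A}
  {ω : A → A → K}

theorem isBilinMap_dblFormPlus (hω : IsBilinMap K A K ω) :
    IsBilinMap K (K × A × K) K (dblFormPlus K A ω) := by
  obtain ⟨h₁, h₂, h₃, h₄⟩ := hω
  refine ⟨?_, ?_, ?_, ?_⟩ <;> intros <;> simp [dblFormPlus, h₁, h₂, h₃, h₄] <;> ring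

theorem isSuperSkew_dblFormPlus (hskew : IsSuperSkew K A sub ω) :
    IsSuperSkew K (K × A × K) (dblSub K A sub true true) (dblFormPlus K A ω) := by
  intro i j X hX Y hY
  obtain ⟨s₁, t₁, a, ha, rfl⟩ := exists_eq_of_mem_dblSub hX
  obtain ⟨s₂, t₂, b, hb, rfl⟩ := exists_eq_of_mem_dblSub hY
  simp only [dblFormPlus]
  linear_combination (norm := (cases i <;> cases j <;> simp only [ssign_false_left,
    ssign_false_right, ssign_true_true, cond_true, cond_false] <;> ring1)) hskew i j a ha b hb

theorem isEvenForm_dblFormPlus (heven : IsEvenForm K A sub ω) :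
    IsEvenForm K (K × A × K) (dblSub K A sub true true) (dblFormPlus K A ω) := by
  rintro X Y (⟨hX, hY⟩ | ⟨hX, hY⟩) <;>
  · obtain ⟨s₁, t₁, a, ha, rfl⟩ := exists_eq_of_mem_dblSub hX
    obtain ⟨s₂, t₂, b, hb, rfl⟩ := exists_eq_of_mem_dblSub hY
    simp [dblFormPlus, heven.apply_eq_zero ha hb]

theorem isNondegForm_dblFormPlus (hω : IsBilinMap K A K ω) (hnondeg : IsNondegForm K A ω) :
    IsNondegForm K (K × A × K) (dblFormPlus K A ω) := by
  rintro ⟨s, a, t⟩ hX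
  have hω0 : ∀ x, ω x 0 = 0 := fun x => by simpa using hω.2.2.2 0 x 0
  have ha : a = 0 := hnondeg a fun y => by simpa [dblFormPlus] using hX (0, y, 0)
  have ht : t = 0 := by simpa [dblFormPlus, hω0] using hX (1, 0, 0)
  have hs : s = 0 := by simpa [dblFormPlus, hω0] using hX (0, 0, 1)
  simp [ha, hs, ht]

end DblFormPlus

section Adjoint

variable {K A : Type*} [Field K] [AddCommGroup A] [Module K A] {sub : Bool → Submodule K A}
  {ω : A →ₗ[K] A →ₗ[K] K} {D : A →ₗ[K] A} {Ds : A → A}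

theorem IsSuperSkew.apply_even_left (hc : IsCompl (sub false) (sub true))
    (hskew : IsSuperSkew K A sub (fun x y => ω x y)) {a₀ : A} (ha₀ : a₀ ∈ sub false) (y : A) :
    ω a₀ y = -ω y a₀ := by
  have : ω a₀ = -ω.flip a₀ := LinearMap.ext_of_isCompl_parity hc fun i y hy => by
    simpa using hskew i false y hy a₀ ha₀
  simpa using LinearMap.congr_fun this y

theorem IsNondegForm.eq_zero_of_orthogonal (hc : IsCompl (sub false) (sub true))
    (hskew : IsSuperSkew K A sub (fun x y => ω x y)) (heven : IsEvenForm K A sub (fun x y => ω x y))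
    (hnondeg : IsNondegForm K A (fun x y => ω x y)) {i : Bool} {w : A} (hw : w ∈ sub i)
    (h : ∀ g ∈ sub i, ω g w = 0) : w = 0 := by
  refine hnondeg w fun y => LinearMap.congr_fun (?_ : ω w = 0) y
  refine LinearMap.ext_of_isCompl_parity hc fun j y hy => ?_
  by_cases hji : j = i
  · subst hji
    simp [hskew j j y hy w hw, h y hy]
  · exact heven.apply_eq_zero hw (by simpa [Bool.eq_not_of_ne hji] using hy)

theorem IsSuperSkew.adjoint_mem (hc : IsCompl (sub false) (sub true))
    (hskew : IsSuperSkew K A sub (fun x y => ω x y)) (heven : IsEvenForm K A sub (fun x y => ω x y))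
    (hnondeg : IsNondegForm K A (fun x y => ω x y)) (hD : ∀ i, ∀ a ∈ sub i, D a ∈ sub (!i))
    (hDs : ∀ i, ∀ f ∈ sub i, ∀ g, ω (D f) g = ssign K i true * ω f (Ds g))
    {i : Bool} {a : A} (ha : a ∈ sub i) : Ds a ∈ sub (!i) := by
  obtain ⟨u, v, huv, -⟩ := Submodule.existsUnique_add_of_isCompl (isCompl_parity hc i) (Ds a)
  suffices hu : (u : A) = 0 by simp [← huv, hu]
  refine hnondeg.eq_zero_of_orthogonal hc hskew heven u.2 fun g hg => ?_
  have hsign : ssign K i true ≠ 0 := by cases i <;> simp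
  have hDs_a : ω g (Ds a) = 0 := by
    simpa [heven.apply_eq_zero (hD i g hg) (by simpa using ha), hsign] using hDs i g hg a
  simpa [← huv, heven.apply_eq_zero hg v.2] using hDs_a

theorem IsSuperSkew.adjoint_apply (hc : IsCompl (sub false) (sub true))
    (hskew : IsSuperSkew K A sub (fun x y => ω x y)) (heven : IsEvenForm K A sub (fun x y => ω x y))
    (hnondeg : IsNondegForm K A (fun x y => ω x y)) (hD : ∀ i, ∀ a ∈ sub i, D a ∈ sub (!i))
    (hDs : ∀ i, ∀ f ∈ sub i, ∀ g, ω (D f) g = ssign K i true * ω f (Ds g))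
    {i : Bool} {a : A} (ha : a ∈ sub i) (b : A) : ω (Ds a) b = ssign K i true * ω a (D b) := by
  suffices h : ω (Ds a) = ssign K i true • (ω a ∘ₗ D) by simpa using LinearMap.congr_fun h b
  refine LinearMap.ext_of_isCompl_parity hc fun j b hb => ?_
  have hDsa := hskew.adjoint_mem hc heven hnondeg hD hDs ha
  have e := hDs j b hb a
  have s₁ := hskew j (!i) b hb (Ds a) hDsa
  have s₂ := hskew (!j) i (D b) (hD j b hb) a ha
  simp only [LinearMap.smul_apply, LinearMap.coe_comp, Function.comp_apply, smul_eq_mul]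
  linear_combination (norm := (cases i <;> cases j <;> simp only [Bool.not_false, Bool.not_true,
    ssign_false_left, ssign_false_right, ssign_true_true] <;> ring1))
    s₁ - ssign K i true * s₂ + ssign K i j * e

theorem IsSuperSkew.invariant_of_adjoint {br : A →ₗ[K] A →ₗ[K] A} {a₀ : A}
    (hc : IsCompl (sub false) (sub true))
    (hskew : IsSuperSkew K A sub (fun x y => ω x y)) (heven : IsEvenForm K A sub (fun x y => ω x y))
    (hnondeg : IsNondegForm K A (fun x y => ω x y)) (hD : ∀ i, ∀ a ∈ sub i, D a ∈ sub (!i))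
    (hDs : ∀ i, ∀ f ∈ sub i, ∀ g, ω (D f) g = ssign K i true * ω f (Ds g))
    (hΩ : ∀ a b, ω (D (D a) - Ds (Ds a)) b = ω a₀ (br a b)) (hDD : ∀ a, D (D a) = br a₀ a)
    {i : Bool} {a : A} (ha : a ∈ sub i) (b : A) :
    ω a₀ (br a b) = ω (br a₀ a) b + ω a (br a₀ b) := by
  have h₁ := hskew.adjoint_apply hc heven hnondeg hD hDs
    (hskew.adjoint_mem hc heven hnondeg hD hDs ha) b
  have h₂ := hskew.adjoint_apply hc heven hnondeg hD hDs ha (D b)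
  rw [← hDD, ← hDD, ← hΩ, map_sub, LinearMap.sub_apply, h₁, h₂]
  cases i <;> simp

end Adjoint

section Extension

variable {K A : Type*} [Field K] [AddCommGroup A] [Module K A] {sub : Bool → Submodule K A}

def derivCocycle (σ D : A →ₗ[K] A) (ω : A →ₗ[K] A →ₗ[K] K) : A →ₗ[K] A →ₗ[K] K :=
  ω.compl₁₂ D LinearMap.id + ω.compl₁₂ σ D

theorem derivCocycle_apply (σ D : A →ₗ[K] A) (ω : A →ₗ[K] A →ₗ[K] K) (a b : A) :
    derivCocycle σ D ω a b = ω (D a) b + ω (σ a) (D b) := rfl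

/-- In coordinates `(s, a, t) = s x + a + t x*`; the parity involution makes the sign
`(-1)^{p(a)}` of `[a, x*] = -(-1)^{p(a)} [x*, a]` bilinear. -/
def doddBracket (hc : IsCompl (sub false) (sub true)) (br : A →ₗ[K] A →ₗ[K] A)
    (ω : A →ₗ[K] A →ₗ[K] K) (D : A →ₗ[K] A) (a₀ : A) :
    (K × A × K) →ₗ[K] (K × A × K) →ₗ[K] (K × A × K) :=
  LinearMap.mk₂ K (fun p q =>
    (derivCocycle (parityInvolution hc) D ω p.2.1 q.2.1 - p.2.2 * ω q.2.1 a₀ + q.2.2 * ω p.2.1 a₀,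
     br p.2.1 q.2.1 + p.2.2 • D q.2.1 - q.2.2 • D (parityInvolution hc p.2.1)
       + (2 * p.2.2 * q.2.2) • a₀,
     0))
    (fun p p' q => by ext <;> simp <;> first | ring1 | module)
    (fun c p q => by ext <;> simp <;> first | ring1 | module)
    (fun p q q' => by ext <;> simp <;> first | ring1 | module)
    (fun c p q => by ext <;> simp <;> first | ring1 | module)

theorem doddBracket_apply (hc : IsCompl (sub false) (sub true)) (br : A →ₗ[K] A →ₗ[K] A)
    (ω : A →ₗ[K] A →ₗ[K] K) (D : A →ₗ[K] A) (a₀ : A) (s t s' t' : K) (a b : A) :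
    doddBracket hc br ω D a₀ (s, a, t) (s', b, t') =
      (derivCocycle (parityInvolution hc) D ω a b - t * ω b a₀ + t' * ω a a₀,
       br a b + t • D b - t' • D (parityInvolution hc a) + (2 * t * t') • a₀, 0) := rfl

structure IsDoddExtensionData (sub : Bool → Submodule K A) (br : A →ₗ[K] A →ₗ[K] A)
    (ω : A →ₗ[K] A →ₗ[K] K) (D : A →ₗ[K] A) (a₀ : A) : Prop where
  lie : IsLieSuperAlg K A sub (fun a b => br a b)
  skew : IsSuperSkew K A sub (fun a b => ω a b)
  closed : IsClosedForm K A sub (fun a b => br a b) (fun a b => ω a b)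
  even : IsEvenForm K A sub (fun a b => ω a b)
  odd : ∀ i, ∀ a ∈ sub i, D a ∈ sub (!i)
  derivation : ∀ i, ∀ f ∈ sub i, ∀ g, D (br f g) = br (D f) g + ssign K i true • br f (D g)
  mem_even : a₀ ∈ sub false
  sq_eq_ad : ∀ a, D (D a) = br a₀ a
  apply_a₀ : D a₀ = 0
  invariant : ∀ i, ∀ a ∈ sub i, ∀ b, ω a₀ (br a b) = ω (br a₀ a) b + ω a (br a₀ b)

namespace IsDoddExtensionData

variable {br : A →ₗ[K] A →ₗ[K] A} {ω : A →ₗ[K] A →ₗ[K] K} {D : A →ₗ[K] A} {a₀ : A}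
  (h : IsDoddExtensionData sub br ω D a₀)
include h

local notation "σ" => parityInvolution h.lie.compl

theorem derivCocycle_apply_of_mem {i : Bool} {a : A} (ha : a ∈ sub i) (b : A) :
    derivCocycle σ D ω a b = ω (D a) b + ssign K i true * ω a (D b) := by
  simp [derivCocycle_apply, parityInvolution_apply _ ha]

theorem derivCocycle_apply_a₀ (x : A) : derivCocycle σ D ω x a₀ = ω (D x) a₀ := by
  simp [derivCocycle_apply, h.apply_a₀]

theorem apply_a₀_left (b : A) : ω a₀ b = -ω b a₀ :=
  h.skew.apply_even_left h.lie.compl h.mem_even b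

theorem apply_a₀_a₀ (h2 : (2 : K) ≠ 0) : ω a₀ a₀ = 0 := by
  have := h.apply_a₀_left a₀
  exact (mul_eq_zero.1 (by linear_combination this : (2 : K) * ω a₀ a₀ = 0)).resolve_left h2

theorem apply_parityInvolution_a₀ (x : A) : ω (σ x) a₀ = ω x a₀ := by
  refine LinearMap.congr_fun (LinearMap.ext_of_isCompl_parity h.lie.compl
    (f := ω.flip a₀ ∘ₗ σ) (g := ω.flip a₀) fun i y hy => ?_) x
  cases i
  · simp [parityInvolution_apply _ hy]
  · simp [parityInvolution_apply _ hy, h.even.apply_eq_zero hy h.mem_even]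

theorem isSuperSkew_derivCocycle :
    IsSuperSkew K A sub (fun a b => derivCocycle σ D ω a b) := by
  intro i j a ha b hb
  have s₁ := h.skew _ _ _ ha _ (h.odd j b hb)
  have s₂ := h.skew _ _ _ (h.odd i a ha) _ hb
  simp only [h.derivCocycle_apply_of_mem ha, h.derivCocycle_apply_of_mem hb]
  linear_combination (norm := (cases i <;> cases j <;> simp only [Bool.not_false, Bool.not_true,
    ssign_false_left, ssign_false_right, ssign_true_true] <;> ring1))
    s₁ + ssign K j true * s₂

theorem isClosedForm_derivCocycle :
    IsClosedForm K A sub (fun a b => br a b) (fun a b => derivCocycle σ D ω a b) := by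
  intro i j k x hx y hy z hz
  simp only [h.derivCocycle_apply_of_mem hx, h.derivCocycle_apply_of_mem hy,
    h.derivCocycle_apply_of_mem hz, h.derivation _ _ hx, h.derivation _ _ hy,
    h.derivation _ _ hz, map_add, map_smul, smul_eq_mul]
  have C₁ := h.closed _ _ _ _ (h.odd _ _ hx) _ hy _ hz
  have C₂ := h.closed _ _ _ _ hx _ (h.odd _ _ hy) _ hz
  have C₃ := h.closed _ _ _ _ hx _ hy _ (h.odd _ _ hz)
  linear_combination (norm := (cases i <;> cases j <;> cases k <;> simp only [Bool.not_false,
    Bool.not_true, ssign_false_left, ssign_false_right, ssign_true_true] <;> ring1))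
    ssign K k true * C₁ + ssign K i true * C₂ + ssign K j true * C₃

/-- In characteristic 3 this does not follow from `isClosedForm_derivCocycle` at `(a, a, a)`. -/
theorem derivCocycle_bracket_self {a : A} (ha : a ∈ sub true) :
    derivCocycle σ D ω a (br a a) = 0 := by
  have C := h.closed _ _ _ _ (h.odd _ _ ha) _ ha _ ha
  simp only [h.derivCocycle_apply_of_mem ha, h.derivation _ _ ha, map_add, map_smul]
  simp only [Bool.not_true, ssign_false_left, ssign_false_right, ssign_true_true] at C ⊢
  linear_combination C

/-- The `𝔞`-component of the Jacobi identity of `𝔤` on `(x*, b, c)`. -/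
theorem derivation_jacobi {j k : Bool} {b c : A} (hb : b ∈ sub j) (hc : c ∈ sub k) :
    ssign K k true • D (br b c) - (ssign K j true * ssign K k true) • br b (D c)
      + ssign K k j • br c (D b) = 0 := by
  linear_combination (norm := (cases j <;> cases k <;> simp only [Bool.not_false, Bool.not_true,
    ssign_false_left, ssign_false_right, ssign_true_true] <;> module))
    ssign K k true • h.derivation j b hb c + ssign K k j • h.lie.antisymm _ _ _ (h.odd j b hb) c hc

/-- The Jacobi identity of `𝔤` on `(x*, x*, c)`. -/
theorem sq_add_bracket_a₀ {k : Bool} {c : A} (hc : c ∈ sub k) : D (D c) + br c a₀ = 0 := by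
  have hanti := h.lie.antisymm false k a₀ h.mem_even c hc
  simp only [ssign_false_left, one_smul] at hanti
  rw [h.sq_eq_ad, hanti, add_neg_cancel]

/-- The `x`-component of the Jacobi identity of `𝔤` on `(x*, b, c)`. -/
theorem derivCocycle_jacobi {j k : Bool} {b c : A} (hb : b ∈ sub j) (hc : c ∈ sub k) :
    -(ssign K k true * ω (br b c) a₀) - ssign K j true * ssign K k true * derivCocycle σ D ω b (D c)
      + ssign K k j * derivCocycle σ D ω c (D b) = 0 := by
  have hab : br a₀ b ∈ sub j := by simpa using h.lie.graded _ _ a₀ h.mem_even b hb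
  have inv := h.invariant j b hb c
  have s₁ := h.skew _ _ _ hab c hc
  have s₂ := h.skew _ _ _ (h.odd j b hb) _ (h.odd k c hc)
  simp only [h.derivCocycle_apply_of_mem hb, h.derivCocycle_apply_of_mem hc, h.sq_eq_ad]
  rw [h.apply_a₀_left] at inv
  linear_combination (norm := (cases j <;> cases k <;> simp only [Bool.not_false, Bool.not_true,
    ssign_false_left, ssign_false_right, ssign_true_true] <;> ring1))
    ssign K k true * inv + ssign K k j * ssign K k true * s₁ + ssign K k j * s₂

theorem doddBracket_mem {i j : Bool} {X Y : K × A × K} (hX : X ∈ dblSub K A sub true true i)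
    (hY : Y ∈ dblSub K A sub true true j) :
    doddBracket h.lie.compl br ω D a₀ X Y ∈ dblSub K A sub true true (xor i j) := by
  obtain ⟨s₁, t₁, a, ha, rfl⟩ := exists_eq_of_mem_dblSub hX
  obtain ⟨s₂, t₂, b, hb, rfl⟩ := exists_eq_of_mem_dblSub hY
  rw [doddBracket_apply, mk_mem_dblSub_iff]
  have hab := h.lie.graded i j a ha b hb
  have hDa := h.odd i a ha
  have hDb := h.odd j b hb
  cases i <;> cases j <;>
    simp only [parityInvolution_apply _ ha, h.derivCocycle_apply_of_mem ha, cond_true, cond_false,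
      Bool.xor_false, Bool.xor_true, Bool.not_false, Bool.not_true, ssign_false_left,
      ssign_true_true, zero_mul, mul_zero, zero_smul, one_smul, neg_one_smul, map_neg, add_zero,
      sub_zero, true_implies, Bool.true_eq_false, false_implies, and_true] at hDa hDb hab ⊢
  · exact ⟨hab, by simp [h.even.apply_eq_zero hDa hb, h.even.apply_eq_zero ha hDb]⟩
  · exact sub_mem hab (Submodule.smul_mem _ _ hDa)
  · exact add_mem hab (Submodule.smul_mem _ _ hDb)
  · refine ⟨by apply_rules [add_mem, sub_mem, Submodule.smul_mem, neg_mem, h.mem_even], ?_⟩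
    simp [h.even.apply_eq_zero hDa hb, h.even.apply_eq_zero ha hDb,
      h.even.apply_eq_zero ha h.mem_even, h.even.apply_eq_zero hb h.mem_even]

theorem doddBracket_antisymm {i j : Bool} {X Y : K × A × K}
    (hX : X ∈ dblSub K A sub true true i) (hY : Y ∈ dblSub K A sub true true j) :
    doddBracket h.lie.compl br ω D a₀ Y X =
      -(ssign K i j • doddBracket h.lie.compl br ω D a₀ X Y) := by
  obtain ⟨s₁, t₁, a, ha, rfl⟩ := exists_eq_of_mem_dblSub hX
  obtain ⟨s₂, t₂, b, hb, rfl⟩ := exists_eq_of_mem_dblSub hY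
  have S := h.isSuperSkew_derivCocycle i j a ha b hb
  have A := h.lie.antisymm i j a ha b hb
  have Ea := h.apply_parityInvolution_a₀ a
  have Eb := h.apply_parityInvolution_a₀ b
  simp only [doddBracket_apply, parityInvolution_apply _ ha, parityInvolution_apply _ hb, map_smul,
    LinearMap.smul_apply, smul_eq_mul, Prod.smul_mk, Prod.neg_mk, Prod.mk.injEq] at Ea Eb ⊢
  refine ⟨?_, ?_, by simp⟩
  · linear_combination (norm := (cases i <;> cases j <;> simp only [ssign_false_left,
      ssign_false_right, ssign_true_true, cond_true, cond_false] <;> ring1))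
      S + cond j t₂ 0 * Ea - cond i t₁ 0 * Eb
  · linear_combination (norm := (cases i <;> cases j <;> simp only [ssign_false_left,
      ssign_false_right, ssign_true_true, cond_true, cond_false] <;> module)) A

theorem jacobi (h2 : (2 : K) ≠ 0) {i j k : Bool} {X Y Z : K × A × K}
    (hX : X ∈ dblSub K A sub true true i) (hY : Y ∈ dblSub K A sub true true j)
    (hZ : Z ∈ dblSub K A sub true true k) :
    ssign K i k • doddBracket h.lie.compl br ω D a₀ X (doddBracket h.lie.compl br ω D a₀ Y Z)
      + ssign K j i • doddBracket h.lie.compl br ω D a₀ Y (doddBracket h.lie.compl br ω D a₀ Z X)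
      + ssign K k j • doddBracket h.lie.compl br ω D a₀ Z (doddBracket h.lie.compl br ω D a₀ X Y)
      = 0 := by
  obtain ⟨s₁, t₁, a, ha, rfl⟩ := exists_eq_of_mem_dblSub hX
  obtain ⟨s₂, t₂, b, hb, rfl⟩ := exists_eq_of_mem_dblSub hY
  obtain ⟨s₃, t₃, c, hc, rfl⟩ := exists_eq_of_mem_dblSub hZ
  have J := h.lie.jacobi i j k a ha b hb c hc
  have C := h.isClosedForm_derivCocycle i j k a ha b hb c hc
  have F₁ := h.derivation_jacobi hb hc
  have F₂ := h.derivation_jacobi hc ha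
  have F₃ := h.derivation_jacobi ha hb
  have G₁ := h.sq_add_bracket_a₀ ha
  have G₂ := h.sq_add_bracket_a₀ hb
  have G₃ := h.sq_add_bracket_a₀ hc
  have H₁ := h.derivCocycle_jacobi hb hc
  have H₂ := h.derivCocycle_jacobi hc ha
  have H₃ := h.derivCocycle_jacobi ha hb
  simp only [doddBracket_apply, parityInvolution_apply _ ha, parityInvolution_apply _ hb,
    parityInvolution_apply _ hc, map_add, map_sub, map_smul, LinearMap.add_apply,
    LinearMap.sub_apply, LinearMap.smul_apply, smul_eq_mul, h.apply_a₀, h.derivCocycle_apply_a₀,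
    h.apply_a₀_a₀ h2, Prod.smul_mk, Prod.mk_add_mk, Prod.mk_eq_zero]
  refine ⟨?_, ?_, by simp⟩
  · linear_combination (norm := (cases i <;> cases j <;> cases k <;> simp only [ssign_false_left,
      ssign_false_right, ssign_true_true, cond_true, cond_false] <;> ring1))
      C + cond i t₁ 0 * H₁ + cond j t₂ 0 * H₂ + cond k t₃ 0 * H₃
  · linear_combination (norm := (cases i <;> cases j <;> cases k <;> simp only [ssign_false_left,
      ssign_false_right, ssign_true_true, cond_true, cond_false] <;> module))
      J + cond i t₁ 0 • F₁ + cond j t₂ 0 • F₂ + cond k t₃ 0 • F₃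
      + (2 * cond j t₂ 0 * cond k t₃ 0 * ssign K i true) • G₁
      + (2 * cond k t₃ 0 * cond i t₁ 0 * ssign K j true) • G₂
      + (2 * cond i t₁ 0 * cond j t₂ 0 * ssign K k true) • G₃

theorem jacobi_self (h2 : (2 : K) ≠ 0) (h3 : ringChar K = 3) {X : K × A × K}
    (hX : X ∈ dblSub K A sub true true true) :
    doddBracket h.lie.compl br ω D a₀ X (doddBracket h.lie.compl br ω D a₀ X X) = 0 := by
  obtain ⟨s, t, a, ha, rfl⟩ := exists_eq_of_mem_dblSub hX
  have J := h.lie.jacobi3 h3 a ha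
  have F := h.derivation_jacobi ha ha
  have G := h.sq_add_bracket_a₀ ha
  have H := h.derivCocycle_jacobi ha ha
  simp only [cond_true, doddBracket_apply, parityInvolution_apply _ ha, map_add, map_sub, map_smul,
    LinearMap.add_apply, LinearMap.sub_apply, LinearMap.smul_apply, smul_eq_mul, h.apply_a₀,
    h.derivCocycle_apply_a₀, h.apply_a₀_a₀ h2, h.derivCocycle_bracket_self ha, Prod.mk_eq_zero]
  simp only [ssign_true_true] at F H ⊢
  refine ⟨?_, ?_, trivial⟩
  · linear_combination -t * H
  · linear_combination (norm := module) J - t • F + (2 * t * t) • G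

theorem isLieSuperAlg (h2 : (2 : K) ≠ 0) :
    IsLieSuperAlg K (K × A × K) (dblSub K A sub true true)
      (fun p q => doddBracket h.lie.compl br ω D a₀ p q) where
  compl := isCompl_dblSub h.lie.compl true true
  bilin := LinearMap.isBilinMap _
  graded _ _ _ hX _ hY := h.doddBracket_mem hX hY
  antisymm _ _ _ hX _ hY := h.doddBracket_antisymm hX hY
  jacobi _ _ _ _ hX _ hY _ hZ := h.jacobi h2 hX hY hZ
  jacobi3 h3 _ hX := h.jacobi_self h2 h3 hX

theorem isClosedForm_dblFormPlus :
    IsClosedForm K (K × A × K) (dblSub K A sub true true)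
      (fun p q => doddBracket h.lie.compl br ω D a₀ p q) (dblFormPlus K A (fun a b => ω a b)) := by
  intro i j k X hX Y hY Z hZ
  obtain ⟨s₁, t₁, a, ha, rfl⟩ := exists_eq_of_mem_dblSub hX
  obtain ⟨s₂, t₂, b, hb, rfl⟩ := exists_eq_of_mem_dblSub hY
  obtain ⟨s₃, t₃, c, hc, rfl⟩ := exists_eq_of_mem_dblSub hZ
  have C := h.closed i j k a ha b hb c hc
  have S₁ := h.skew _ _ _ (h.odd j b hb) c hc
  have S₂ := h.skew _ _ _ (h.odd k c hc) a ha
  have S₃ := h.skew _ _ _ (h.odd i a ha) b hb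
  have Ea := h.apply_parityInvolution_a₀ a
  have Eb := h.apply_parityInvolution_a₀ b
  have Ec := h.apply_parityInvolution_a₀ c
  simp only [dblFormPlus, doddBracket_apply, parityInvolution_apply _ ha,
    parityInvolution_apply _ hb, parityInvolution_apply _ hc, h.derivCocycle_apply_of_mem ha,
    h.derivCocycle_apply_of_mem hb, h.derivCocycle_apply_of_mem hc, map_add, map_sub, map_smul,
    LinearMap.smul_apply, smul_eq_mul] at Ea Eb Ec ⊢
  linear_combination (norm := (cases i <;> cases j <;> cases k <;> simp only [Bool.not_false,
      Bool.not_true, ssign_false_left, ssign_false_right, ssign_true_true, cond_true,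
      cond_false] <;> ring1))
    C + cond i t₁ 0 * ssign K k j * S₁ + cond j t₂ 0 * ssign K i k * S₂
      + cond k t₃ 0 * ssign K j i * S₃ + cond i t₁ 0 * cond j t₂ 0 * Ec
      + cond j t₂ 0 * cond k t₃ 0 * Ea + cond k t₃ 0 * cond i t₁ 0 * Eb

end IsDoddExtensionData

end Extension

theorem doddExtension_orthosymplectic_general
    (K A : Type*) [Field K] [AddCommGroup A] [Module K A]
    (hchar : ringChar K ≠ 2)
    (subA : Bool → Submodule K A) (brA : A → A → A) (ωA : A → A → K)
    (hLie : IsLieSuperAlg K A subA brA)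
    (hQF : IsQuasiFrobenius K A subA brA ωA)
    (hEven : IsEvenForm K A subA ωA)
    (D Ds : A → A)
    (hDadd : ∀ a b : A, D (a + b) = D a + D b)
    (hDsmul : ∀ (c : K) (a : A), D (c • a) = c • D a)
    (hDodd : ∀ i : Bool, ∀ a ∈ subA i, D a ∈ subA (!i))
    (hDder : ∀ i : Bool, ∀ f ∈ subA i, ∀ g : A,
      D (brA f g) = brA (D f) g + ssign K i true • brA f (D g))
    (hDs : ∀ i : Bool, ∀ f ∈ subA i, ∀ g : A, ωA (D f) g = ssign K i true * ωA f (Ds g))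
    (a₀ : A) (ha₀even : a₀ ∈ subA false)
    (hΩ : ∀ a b : A, ωA (D (D a) - Ds (Ds a)) b = ωA a₀ (brA a b))
    (hDD : ∀ a : A, D (D a) = brA a₀ a)
    (hDa₀ : D a₀ = 0) :
    ∃ brG : K × A × K → K × A × K → K × A × K,
      IsLieSuperAlg K (K × A × K) (dblSub K A subA true true) brG
      -- the defining brackets: `x = (1,0,0)` and `x* = (0,0,1)` are odd,
      -- `[x, 𝔤] = 0`, `[a,b] = [a,b]_𝔞 + (ω_𝔞(𝒟a, b) + (−1)^{p(a)} ω_𝔞(a, 𝒟b))·x`,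
      -- `[x*,x*] = 2a₀`, `[x*,a] = 𝒟a − ω_𝔞(a, a₀)·x`
      ∧ (∀ g : K × A × K, brG (1, 0, 0) g = 0)
      ∧ (∀ i : Bool, ∀ a ∈ subA i, ∀ b : A,
          brG (0, a, 0) (0, b, 0) = (ωA (D a) b + ssign K i true * ωA a (D b), brA a b, 0))
      ∧ brG (0, 0, 1) (0, 0, 1) = (0, (2 : K) • a₀, 0)
      ∧ (∀ a : A, brG (0, 0, 1) (0, a, 0) = (-(ωA a a₀), D a, 0))
      -- the orthosymplectic form
      ∧ IsBilinMap K (K × A × K) K (dblFormPlus K A ωA)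
      ∧ IsSuperSkew K (K × A × K) (dblSub K A subA true true) (dblFormPlus K A ωA)
      ∧ IsClosedForm K (K × A × K) (dblSub K A subA true true) brG (dblFormPlus K A ωA)
      ∧ IsNondegForm K (K × A × K) (dblFormPlus K A ωA)
      ∧ IsEvenForm K (K × A × K) (dblSub K A subA true true) (dblFormPlus K A ωA) := by
  obtain ⟨hbil, hskew, hclosed, hnondeg⟩ := hQF
  let ω : A →ₗ[K] A →ₗ[K] K := LinearMap.mk₂ K ωA hbil.1 hbil.2.1 hbil.2.2.1 hbil.2.2.2
  let br : A →ₗ[K] A →ₗ[K] A :=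
    LinearMap.mk₂ K brA hLie.bilin.1 hLie.bilin.2.1 hLie.bilin.2.2.1 hLie.bilin.2.2.2
  let DL : A →ₗ[K] A := ⟨⟨D, hDadd⟩, hDsmul⟩
  have h : IsDoddExtensionData subA br ω DL a₀ :=
    { lie := hLie, skew := hskew, closed := hclosed, even := hEven, odd := hDodd,
      derivation := hDder, mem_even := ha₀even, sq_eq_ad := hDD, apply_a₀ := hDa₀,
      invariant := fun _ _ ha b => hskew.invariant_of_adjoint (ω := ω) (D := DL) (br := br)
        hLie.compl hEven hnondeg hDodd hDs hΩ hDD ha b }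
  refine ⟨fun p q => doddBracket hLie.compl br ω DL a₀ p q,
    h.isLieSuperAlg (Ring.two_ne_zero hchar), ?_, ?_, ?_, ?_, isBilinMap_dblFormPlus hbil,
    isSuperSkew_dblFormPlus hskew, h.isClosedForm_dblFormPlus,
    isNondegForm_dblFormPlus hbil hnondeg, isEvenForm_dblFormPlus hEven⟩
  · rintro ⟨s, b, t⟩
    simp [doddBracket_apply]
  · intro i a ha b
    simp [doddBracket_apply, h.derivCocycle_apply_of_mem ha, ω, br, DL]
  · simp [doddBracket_apply]
  · intro a
    simp [doddBracket_apply, ω, br, DL]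

/-- The `𝒟`-odd double extension of an orthosymplectic quasi-Frobenius
Lie superalgebra `(𝔞, ω_𝔞)` by an odd derivation `𝒟` (with adjoint `𝒟*`) and an even
`a₀ ∈ 𝔞` with `𝒟² = ad_{a₀}`, `𝒟(a₀) = 0` and the coboundary condition, carries a Lie
superalgebra structure (with `x, x*` odd) on `𝕂x ⊕ 𝔞 ⊕ 𝕂x*` with the stated brackets,
and the stated even form is closed, anti-symmetric and non-degenerate, i.e. the result
is an orthosymplectic quasi-Frobenius Lie superalgebra. -/
theorem doddExtension_orthosymplectic
    (K A : Type*) [Field K] [AddCommGroup A] [Module K A]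
    (hchar : ringChar K ≠ 2)
    (subA : Bool → Submodule K A) (brA : A → A → A) (ωA : A → A → K)
    (hLie : IsLieSuperAlg K A subA brA)
    (hQF : IsQuasiFrobenius K A subA brA ωA)
    (hEven : IsEvenForm K A subA ωA)
    (D Ds : A → A)
    (hDadd : ∀ a b : A, D (a + b) = D a + D b)
    (hDsmul : ∀ (c : K) (a : A), D (c • a) = c • D a)
    (hDodd : ∀ i : Bool, ∀ a ∈ subA i, D a ∈ subA (!i))
    (hDder : ∀ i : Bool, ∀ f ∈ subA i, ∀ g : A,
      D (brA f g) = brA (D f) g + ssign K i true • brA f (D g))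
    (hDsadd : ∀ a b : A, Ds (a + b) = Ds a + Ds b)
    (hDssmul : ∀ (c : K) (a : A), Ds (c • a) = c • Ds a)
    (hDs : ∀ i : Bool, ∀ f ∈ subA i, ∀ g : A, ωA (D f) g = ssign K i true * ωA f (Ds g))
    (a₀ : A) (ha₀even : a₀ ∈ subA false)
    (hΩ : ∀ a b : A, ωA (D (D a) - Ds (Ds a)) b = ωA a₀ (brA a b))
    (hDD : ∀ a : A, D (D a) = brA a₀ a)
    (hDa₀ : D a₀ = 0) :
    ∃ brG : K × A × K → K × A × K → K × A × K,
      IsLieSuperAlg K (K × A × K) (dblSub K A subA true true) brG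
      -- the defining brackets: `x = (1,0,0)` and `x* = (0,0,1)` are odd,
      -- `[x, 𝔤] = 0`, `[a,b] = [a,b]_𝔞 + (ω_𝔞(𝒟a, b) + (−1)^{p(a)} ω_𝔞(a, 𝒟b))·x`,
      -- `[x*,x*] = 2a₀`, `[x*,a] = 𝒟a − ω_𝔞(a, a₀)·x`
      ∧ (∀ g : K × A × K, brG (1, 0, 0) g = 0)
      ∧ (∀ i : Bool, ∀ a ∈ subA i, ∀ b : A,
          brG (0, a, 0) (0, b, 0) = (ωA (D a) b + ssign K i true * ωA a (D b), brA a b, 0))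
      ∧ brG (0, 0, 1) (0, 0, 1) = (0, (2 : K) • a₀, 0)
      ∧ (∀ a : A, brG (0, 0, 1) (0, a, 0) = (-(ωA a a₀), D a, 0))
      -- the orthosymplectic form
      ∧ IsBilinMap K (K × A × K) K (dblFormPlus K A ωA)
      ∧ IsSuperSkew K (K × A × K) (dblSub K A subA true true) (dblFormPlus K A ωA)
      ∧ IsClosedForm K (K × A × K) (dblSub K A subA true true) brG (dblFormPlus K A ωA)
      ∧ IsNondegForm K (K × A × K) (dblFormPlus K A ωA)
      ∧ IsEvenForm K (K × A × K) (dblSub K A subA true true) (dblFormPlus K A ωA) :=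
  doddExtension_orthosymplectic_general K A hchar subA brA ωA hLie hQF hEven D Ds hDadd hDsmul hDodd
    hDder hDs a₀ ha₀even hΩ hDD hDa₀
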